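/- arXiv:2112.12418 — 2 statements merged into one kernel-verified Lean document; each statement's English description precedes it below -/
import Mathlib

section
/- In the Chevalley–Eilenberg algebra of the Bigalke–Rollenske nilmanifold X^{4n−2} (n ≥ 2), splitting d = ∂ + ∂̄ by bidegree, the real positive (4n−3,4n−3)-form ψ := φ¹∧φ̄¹∧⋯∧φ^{4n−3}∧φ̄^{4n−3} is ∂∂̄-exact: ψ = ∂∂̄( φ¹∧φ̄¹∧⋯∧(omit φ^{n−1}∧φ̄^{n−1})∧⋯∧(omit φ^{2n−1}∧φ̄^{2n−1})∧⋯∧φ^{4n−2}∧φ̄^{4n−2} ). -/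
/-!
The elements `τ j = φʲ ∧ φ̄ʲ` (`pair j`) are central, so their products can be reordered at will,
and such a product is killed by `φᵏ` and `φ̄ᵏ` as soon as `τ k` is one of its factors.
For `M = {1, …, 4n−3} ∖ {n−1, 2n−1}` (`closedIndices n`), each of `∂φʲ, ∂φ̄ʲ, ∂̄φʲ, ∂̄φ̄ʲ` with
`j ∈ M` is zero or contains a factor `φᵏ` or `φ̄ᵏ` with `k ∈ M ∖ {j}`, so `τ_M = ∏_{j ∈ M} τ j` is
both `∂`- and `∂̄`-closed. Hence `∂̄(τ (4n−2) τ_M) = −φ^{4n−2} φ̄^{n−1} φ̄^{2n−1} τ_M`, the other term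
of the Leibniz rule containing `φ^{2n−2}`, and applying `∂` only `∂φ^{4n−2} = φ^{n−1} φ^{2n−1}`
survives, which gives `τ (n−1) τ (2n−1) τ_M = ψ`.
-/

noncomputable section

abbrev Vsp : Type := (ℕ ⊕ ℕ) →₀ ℂ
abbrev ExtA : Type := ExteriorAlgebra ℂ Vsp

def φ (j : ℕ) : ExtA := ExteriorAlgebra.ι ℂ (Finsupp.single (Sum.inl j) 1)
def φb (j : ℕ) : ExtA := ExteriorAlgebra.ι ℂ (Finsupp.single (Sum.inr j) 1)

/-- the list [1, …, m] -/
def idx (m : ℕ) : List ℕ := (List.range m).map (· + 1)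

namespace ExteriorAlgebra

variable {R M : Type*} [CommRing R] [AddCommGroup M] [Module R M]

theorem ι_mul_ι_anticomm (v w : M) : ι R v * ι R w = -(ι R w * ι R v) :=
  eq_neg_of_add_eq_zero_left (ι_add_mul_swap v w)

theorem ι_mul_ι_commute (v w : M) (x : ExteriorAlgebra R M) : Commute (ι R v * ι R w) x := by
  induction x using ExteriorAlgebra.induction with
  | algebraMap r => exact (Algebra.commute_algebraMap_left r _).symm
  | ι u =>
    show ι R v * ι R w * ι R u = ι R u * (ι R v * ι R w)
    rw [mul_assoc, ι_mul_ι_anticomm w u, mul_neg, ← mul_assoc, ι_mul_ι_anticomm v u, neg_mul,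
      neg_neg, mul_assoc]
  | mul a b ha hb => exact ha.mul_right hb
  | add a b ha hb => exact ha.add_right hb

end ExteriorAlgebra

namespace BigalkeRollenske

open ExteriorAlgebra

def pair (j : ℕ) : ExtA := φ j * φb j

def pairProd (L : List ℕ) : ExtA := (L.map pair).prod

theorem pair_commute (j : ℕ) (x : ExtA) : Commute (pair j) x := ι_mul_ι_commute _ _ x

theorem pairProd_commute (L : List ℕ) (x : ExtA) : Commute (pairProd L) x :=
  Commute.list_prod_left _ _ fun _ hy => by
    obtain ⟨j, -, rfl⟩ := List.mem_map.mp hy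
    exact pair_commute j x

theorem pairProd_cons (j : ℕ) (L : List ℕ) : pairProd (j :: L) = pair j * pairProd L :=
  List.prod_cons

theorem pairProd_perm {L L' : List ℕ} (h : L.Perm L') : pairProd L = pairProd L' :=
  (h.map pair).prod_eq' <| List.pairwise_of_forall_mem_list fun _ hx y _ => by
    obtain ⟨j, -, rfl⟩ := List.mem_map.mp hx
    exact pair_commute j y

theorem phi_mul_pairProd {k : ℕ} {L : List ℕ} (hk : k ∈ L) : φ k * pairProd L = 0 := by
  rw [pairProd_perm (List.perm_cons_erase hk), pairProd_cons, pair, mul_assoc, ← mul_assoc (φ k),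
    φ, ι_sq_zero, zero_mul]

theorem phib_mul_pairProd {k : ℕ} {L : List ℕ} (hk : k ∈ L) : φb k * pairProd L = 0 := by
  rw [pairProd_perm (List.perm_cons_erase hk), pairProd_cons, ← mul_assoc,
    ← (pair_commute k (φb k)).eq, pair, mul_assoc (φ k), φb, ι_sq_zero, mul_zero, zero_mul]

theorem mul_mul_pairProd_of_left {x : ExtA} {L : List ℕ} (h : x * pairProd L = 0) (y : ExtA) :
    x * y * pairProd L = 0 := by
  rw [mul_assoc, ← (pairProd_commute L y).eq, ← mul_assoc, h, zero_mul]

theorem mul_mul_pairProd_of_right {y : ExtA} {L : List ℕ} (h : y * pairProd L = 0) (x : ExtA) :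
    x * y * pairProd L = 0 := by
  rw [mul_assoc, h, mul_zero]

def AntiLeibniz (D : ExtA →ₗ[ℂ] ExtA) : Prop :=
  ∀ (v : Vsp) (y : ExtA), D (ι ℂ v * y) = D (ι ℂ v) * y - ι ℂ v * D y

def pairDeriv (D : ExtA →ₗ[ℂ] ExtA) (j : ℕ) : ExtA := D (φ j) * φb j - φ j * D (φb j)

namespace AntiLeibniz

variable {D : ExtA →ₗ[ℂ] ExtA}

theorem map_phi_mul (hD : AntiLeibniz D) (j : ℕ) (y : ExtA) :
    D (φ j * y) = D (φ j) * y - φ j * D y :=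
  hD _ y

theorem map_phib_mul (hD : AntiLeibniz D) (j : ℕ) (y : ExtA) :
    D (φb j * y) = D (φb j) * y - φb j * D y :=
  hD _ y

theorem map_pair_mul (hD : AntiLeibniz D) (j : ℕ) (y : ExtA) :
    D (pair j * y) = pairDeriv D j * y + pair j * D y := by
  rw [pair, mul_assoc, hD.map_phi_mul, hD.map_phib_mul, pairDeriv]
  noncomm_ring

theorem pair_mul_map_one (hD : AntiLeibniz D) (j : ℕ) : pair j * D 1 = 0 := by
  have h := hD.map_phib_mul j 1
  rw [mul_one, mul_one, eq_comm, sub_eq_self] at h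
  rw [pair, mul_assoc, h, mul_zero]

-- `AntiLeibniz D` only gives `ι v * D 1 = 0`, not `D 1 = 0`; hence the last term.
theorem map_pairProd (hD : AntiLeibniz D) {L : List ℕ} (hL : L.Nodup) :
    D (pairProd L) = ∑ j ∈ L.toFinset, pairDeriv D j * pairProd (L.erase j) + pairProd L * D 1 := by
  induction L with
  | nil => simp [pairProd]
  | cons j L ih =>
    obtain ⟨hj, hL⟩ := List.nodup_cons.mp hL
    have hsum : pair j * ∑ k ∈ L.toFinset, pairDeriv D k * pairProd (L.erase k)
        = ∑ k ∈ L.toFinset, pairDeriv D k * pairProd ((j :: L).erase k) := by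
      rw [Finset.mul_sum]
      refine Finset.sum_congr rfl fun k hk => ?_
      have hjk : j ≠ k := by rintro rfl; exact hj (List.mem_toFinset.mp hk)
      rw [List.erase_cons_tail (by simpa using hjk), pairProd_cons, ← mul_assoc,
        (pair_commute j _).eq, mul_assoc]
    rw [pairProd_cons, hD.map_pair_mul, ih hL, mul_add, hsum, List.toFinset_cons,
      Finset.sum_insert (by simpa using hj), List.erase_cons_head, ← mul_assoc]
    abel

theorem map_pairProd_eq_zero (hD : AntiLeibniz D) {L : List ℕ} (hL : L.Nodup) (hne : L ≠ [])
    (h : ∀ j ∈ L, pairDeriv D j * pairProd (L.erase j) = 0) : D (pairProd L) = 0 := by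
  obtain ⟨j, M, rfl⟩ := List.exists_cons_of_ne_nil hne
  have hone : pairProd (j :: M) * D 1 = 0 := by
    rw [pairProd_cons, (pair_commute j _).eq, mul_assoc, hD.pair_mul_map_one, mul_zero]
  rw [hD.map_pairProd hL, hone, add_zero]
  exact Finset.sum_eq_zero fun k hk => h k (List.mem_toFinset.mp hk)

end AntiLeibniz

theorem mem_idx {j m : ℕ} : j ∈ idx m ↔ 1 ≤ j ∧ j ≤ m := by
  simp only [idx, List.mem_map, List.mem_range]
  constructor
  · rintro ⟨a, ha, rfl⟩
    omega
  · rintro ⟨h1, h2⟩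
    exact ⟨j - 1, by omega, by omega⟩

theorem nodup_idx (m : ℕ) : (idx m).Nodup :=
  List.nodup_range.map fun _ _ => Nat.succ_inj.mp

def closedIndices (n : ℕ) : List ℕ :=
  (idx (4 * n - 3)).filter fun j => j ≠ n - 1 ∧ j ≠ 2 * n - 1

theorem nodup_closedIndices (n : ℕ) : (closedIndices n).Nodup := (nodup_idx _).filter _

theorem mem_closedIndices {n j : ℕ} :
    j ∈ closedIndices n ↔ 1 ≤ j ∧ j ≤ 4 * n - 3 ∧ j ≠ n - 1 ∧ j ≠ 2 * n - 1 := by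
  simp only [closedIndices, List.mem_filter, mem_idx, decide_eq_true_eq, and_assoc]

theorem mem_closedIndices_erase {n j k : ℕ} :
    k ∈ (closedIndices n).erase j ↔
      k ≠ j ∧ 1 ≤ k ∧ k ≤ 4 * n - 3 ∧ k ≠ n - 1 ∧ k ≠ 2 * n - 1 := by
  rw [(nodup_closedIndices n).mem_erase_iff, mem_closedIndices]

theorem closedIndices_ne_nil {n : ℕ} (hn : 2 ≤ n) : closedIndices n ≠ [] :=
  List.ne_nil_of_mem (a := 2 * n) (mem_closedIndices.mpr (by omega))

theorem pairProd_idx_eq {n : ℕ} (hn : 2 ≤ n) :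
    pairProd (idx (4 * n - 3)) = pair (n - 1) * (pair (2 * n - 1) * pairProd (closedIndices n)) := by
  have hnodup : ((n - 1) :: (2 * n - 1) :: closedIndices n).Nodup := by
    simp only [List.nodup_cons, List.mem_cons, mem_closedIndices]
    exact ⟨by omega, by omega, nodup_closedIndices n⟩
  rw [← pairProd_cons, ← pairProd_cons]
  refine pairProd_perm ((List.perm_ext_iff_of_nodup (nodup_idx _) hnodup).mpr fun k => ?_)
  simp only [List.mem_cons, mem_closedIndices, mem_idx]
  omega

theorem pairProd_filter_idx_eq {n : ℕ} (hn : 2 ≤ n) :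
    pairProd ((idx (4 * n - 2)).filter fun j => j ≠ n - 1 ∧ j ≠ 2 * n - 1)
      = pair (4 * n - 2) * pairProd (closedIndices n) := by
  have hnodup : ((4 * n - 2) :: closedIndices n).Nodup :=
    List.nodup_cons.mpr ⟨by rw [mem_closedIndices]; omega, nodup_closedIndices n⟩
  rw [← pairProd_cons]
  refine pairProd_perm ((List.perm_ext_iff_of_nodup ((nodup_idx _).filter _) hnodup).mpr fun k => ?_)
  simp only [List.mem_filter, List.mem_cons, mem_closedIndices, mem_idx, decide_eq_true_eq]
  omega

variable {n : ℕ} {del delbar : ExtA →ₗ[ℂ] ExtA}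

theorem delbar_pairProd_closedIndices (hn : 2 ≤ n) (hleibb : AntiLeibniz delbar)
    (hdelbar0 : ∀ j, 1 ≤ j → j < 3 * n - 1 → delbar (φ j) = 0)
    (hdelbar1 : delbar (φ (3 * n - 1)) = φ (2 * n) * φb n)
    (hdelbar : ∀ j, 3 * n ≤ j → j ≤ 4 * n - 2 → delbar (φ j) = φ (j - 2 * n) * φb (j - n))
    (hdelbarb0 : ∀ j, 1 ≤ j → j ≤ 3 * n - 1 → delbar (φb j) = 0)
    (hdelbarb : ∀ j, 3 * n ≤ j → j ≤ 4 * n - 2 →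
      delbar (φb j) = φb (j - 3 * n + 1) * φb (j - 2 * n + 1)) :
    delbar (pairProd (closedIndices n)) = 0 := by
  refine hleibb.map_pairProd_eq_zero (nodup_closedIndices n) (closedIndices_ne_nil hn)
    fun j hj => ?_
  rw [mem_closedIndices] at hj
  rcases lt_trichotomy j (3 * n - 1) with hlt | rfl | hgt
  · rw [pairDeriv, hdelbar0 j hj.1 hlt, hdelbarb0 j hj.1 hlt.le, zero_mul, mul_zero, sub_zero,
      zero_mul]
  · rw [pairDeriv, hdelbar1, hdelbarb0 _ hj.1 le_rfl, mul_zero, sub_zero]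
    refine mul_mul_pairProd_of_left (mul_mul_pairProd_of_left (phi_mul_pairProd ?_) _) _
    rw [mem_closedIndices_erase]
    omega
  · rw [pairDeriv, hdelbar j (by omega) (by omega), hdelbarb j (by omega) (by omega), sub_mul,
      mul_mul_pairProd_of_left (mul_mul_pairProd_of_left (phi_mul_pairProd ?_) _) _,
      mul_mul_pairProd_of_right (mul_mul_pairProd_of_left (phib_mul_pairProd ?_) _) _, sub_zero]
    all_goals rw [mem_closedIndices_erase]; omega

theorem del_pairProd_closedIndices (hn : 2 ≤ n) (hleib : AntiLeibniz del)
    (hdel0 : ∀ j, 1 ≤ j → j ≤ 3 * n - 1 → del (φ j) = 0)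
    (hdel : ∀ j, 3 * n ≤ j → j ≤ 4 * n - 2 → del (φ j) = φ (j - 3 * n + 1) * φ (j - 2 * n + 1))
    (hdelb0 : ∀ j, 1 ≤ j → j < 3 * n - 1 → del (φb j) = 0)
    (hdelb1 : del (φb (3 * n - 1)) = φb (2 * n) * φ n)
    (hdelb : ∀ j, 3 * n ≤ j → j ≤ 4 * n - 2 → del (φb j) = φb (j - 2 * n) * φ (j - n)) :
    del (pairProd (closedIndices n)) = 0 := by
  refine hleib.map_pairProd_eq_zero (nodup_closedIndices n) (closedIndices_ne_nil hn)
    fun j hj => ?_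
  rw [mem_closedIndices] at hj
  rcases lt_trichotomy j (3 * n - 1) with hlt | rfl | hgt
  · rw [pairDeriv, hdel0 j hj.1 hlt.le, hdelb0 j hj.1 hlt, zero_mul, mul_zero, sub_zero,
      zero_mul]
  · rw [pairDeriv, hdel0 _ hj.1 le_rfl, hdelb1, zero_mul, zero_sub, neg_mul, neg_eq_zero]
    refine mul_mul_pairProd_of_right (mul_mul_pairProd_of_left (phib_mul_pairProd ?_) _) _
    rw [mem_closedIndices_erase]
    omega
  · rw [pairDeriv, hdel j (by omega) (by omega), hdelb j (by omega) (by omega), sub_mul,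
      mul_mul_pairProd_of_left (mul_mul_pairProd_of_left (phi_mul_pairProd ?_) _) _,
      mul_mul_pairProd_of_right (mul_mul_pairProd_of_left (phib_mul_pairProd ?_) _) _, sub_zero]
    all_goals rw [mem_closedIndices_erase]; omega

theorem delbar_pair_mul_pairProd_closedIndices (hn : 2 ≤ n) (hleibb : AntiLeibniz delbar)
    (hclosed : delbar (pairProd (closedIndices n)) = 0)
    (hdelbar : ∀ j, 3 * n ≤ j → j ≤ 4 * n - 2 → delbar (φ j) = φ (j - 2 * n) * φb (j - n))
    (hdelbarb : ∀ j, 3 * n ≤ j → j ≤ 4 * n - 2 →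
      delbar (φb j) = φb (j - 3 * n + 1) * φb (j - 2 * n + 1)) :
    delbar (pair (4 * n - 2) * pairProd (closedIndices n))
      = -(φ (4 * n - 2) * (φb (n - 1) * (φb (2 * n - 1) * pairProd (closedIndices n)))) := by
  have hφb := hdelbarb (4 * n - 2) (by omega) (by omega)
  rw [show 4 * n - 2 - 3 * n + 1 = n - 1 by omega, show 4 * n - 2 - 2 * n + 1 = 2 * n - 1 by omega]
    at hφb
  rw [hleibb.map_pair_mul, hclosed, mul_zero, add_zero, pairDeriv,
    hdelbar (4 * n - 2) (by omega) (by omega), hφb, sub_mul,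
    mul_mul_pairProd_of_left (mul_mul_pairProd_of_left (phi_mul_pairProd ?_) _) _, zero_sub]
  · simp only [mul_assoc]
  · rw [mem_closedIndices]
    omega

theorem del_phi_mul_phib_mul_phib_mul_pairProd_closedIndices (hn : 2 ≤ n)
    (hleib : AntiLeibniz del) (hclosed : del (pairProd (closedIndices n)) = 0)
    (hdel : ∀ j, 3 * n ≤ j → j ≤ 4 * n - 2 → del (φ j) = φ (j - 3 * n + 1) * φ (j - 2 * n + 1))
    (hdelb0 : ∀ j, 1 ≤ j → j < 3 * n - 1 → del (φb j) = 0) :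
    del (φ (4 * n - 2) * (φb (n - 1) * (φb (2 * n - 1) * pairProd (closedIndices n))))
      = φ (n - 1) * φ (2 * n - 1) * (φb (n - 1) * (φb (2 * n - 1) * pairProd (closedIndices n))) := by
  have hφ := hdel (4 * n - 2) (by omega) (by omega)
  rw [show 4 * n - 2 - 3 * n + 1 = n - 1 by omega, show 4 * n - 2 - 2 * n + 1 = 2 * n - 1 by omega]
    at hφ
  rw [hleib.map_phi_mul, hleib.map_phib_mul, hleib.map_phib_mul, hclosed,
    hdelb0 (n - 1) (by omega) (by omega), hdelb0 (2 * n - 1) (by omega) (by omega), hφ]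
  simp only [zero_mul, mul_zero, sub_zero]

theorem phi_mul_phi_mul_phib_mul_phib_mul (j k : ℕ) (x : ExtA) :
    φ j * φ k * (φb j * (φb k * x)) = -(pair j * (pair k * x)) := by
  have hswap : φ k * φb j = -(φb j * φ k) := ι_mul_ι_anticomm _ _
  rw [mul_assoc (φ j), ← mul_assoc (φ k), hswap, pair, pair]
  noncomm_ring

end BigalkeRollenske

open BigalkeRollenske in
theorem stmt_12_general (n : ℕ) (hn : 2 ≤ n) (del delbar : ExtA →ₗ[ℂ] ExtA)
    (hleib : ∀ (v : Vsp) (y : ExtA),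
      del (ExteriorAlgebra.ι ℂ v * y)
        = del (ExteriorAlgebra.ι ℂ v) * y - ExteriorAlgebra.ι ℂ v * del y)
    (hleibb : ∀ (v : Vsp) (y : ExtA),
      delbar (ExteriorAlgebra.ι ℂ v * y)
        = delbar (ExteriorAlgebra.ι ℂ v) * y - ExteriorAlgebra.ι ℂ v * delbar y)
    (hdel0 : ∀ j, 1 ≤ j → j ≤ 3 * n - 1 → del (φ j) = 0)
    (hdel : ∀ j, 3 * n ≤ j → j ≤ 4 * n - 2 →
      del (φ j) = φ (j - 3 * n + 1) * φ (j - 2 * n + 1))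
    (hdelbar0 : ∀ j, 1 ≤ j → j < 3 * n - 1 → delbar (φ j) = 0)
    (hdelbar1 : delbar (φ (3 * n - 1)) = φ (2 * n) * φb n)
    (hdelbar : ∀ j, 3 * n ≤ j → j ≤ 4 * n - 2 →
      delbar (φ j) = φ (j - 2 * n) * φb (j - n))
    (hdelb0 : ∀ j, 1 ≤ j → j < 3 * n - 1 → del (φb j) = 0)
    (hdelb1 : del (φb (3 * n - 1)) = φb (2 * n) * φ n)
    (hdelb : ∀ j, 3 * n ≤ j → j ≤ 4 * n - 2 →
      del (φb j) = φb (j - 2 * n) * φ (j - n))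
    (hdelbarb0 : ∀ j, 1 ≤ j → j ≤ 3 * n - 1 → delbar (φb j) = 0)
    (hdelbarb : ∀ j, 3 * n ≤ j → j ≤ 4 * n - 2 →
      delbar (φb j) = φb (j - 3 * n + 1) * φb (j - 2 * n + 1)) :
    ((idx (4 * n - 3)).map (fun j => φ j * φb j)).prod
      = del (delbar
          ((((idx (4 * n - 2)).filter (fun j => j ≠ n - 1 ∧ j ≠ 2 * n - 1)).map
            (fun j => φ j * φb j)).prod)) := by
  have hclosedb := delbar_pairProd_closedIndices hn hleibb hdelbar0 hdelbar1 hdelbar hdelbarb0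
    hdelbarb
  have hclosed := del_pairProd_closedIndices hn hleib hdel0 hdel hdelb0 hdelb1 hdelb
  change pairProd _ = del (delbar (pairProd _))
  rw [pairProd_idx_eq hn, pairProd_filter_idx_eq hn,
    delbar_pair_mul_pairProd_closedIndices hn hleibb hclosedb hdelbar hdelbarb, map_neg,
    del_phi_mul_phib_mul_phib_mul_pairProd_closedIndices hn hleib hclosed hdel hdelb0,
    phi_mul_phi_mul_phib_mul_phib_mul, neg_neg]

/-- splitting d = ∂ + ∂̄ by bidegree in the Bigalke–Rollenske algebra,
the real positive (4n−3,4n−3)-form ψ = φ¹∧φ̄¹∧⋯∧φ^{4n−3}∧φ̄^{4n−3} is ∂∂̄-exact: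
ψ = ∂∂̄(φ¹∧φ̄¹∧⋯(omit φ^{n−1}∧φ̄^{n−1})⋯(omit φ^{2n−1}∧φ̄^{2n−1})⋯∧φ^{4n−2}∧φ̄^{4n−2}). -/
theorem stmt_12 (n : ℕ) (hn : 2 ≤ n) (del delbar : ExtA →ₗ[ℂ] ExtA)
    (hleib : ∀ (v : Vsp) (y : ExtA),
      del (ExteriorAlgebra.ι ℂ v * y)
        = del (ExteriorAlgebra.ι ℂ v) * y - ExteriorAlgebra.ι ℂ v * del y)
    (hleibb : ∀ (v : Vsp) (y : ExtA),
      delbar (ExteriorAlgebra.ι ℂ v * y)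
        = delbar (ExteriorAlgebra.ι ℂ v) * y - ExteriorAlgebra.ι ℂ v * delbar y)
    (hsq : ∀ x, del (del x) = 0) (hsqb : ∀ x, delbar (delbar x) = 0)
    (hanti : ∀ x, del (delbar x) + delbar (del x) = 0)
    (hdel0 : ∀ j, 1 ≤ j → j ≤ 3 * n - 1 → del (φ j) = 0)
    (hdel : ∀ j, 3 * n ≤ j → j ≤ 4 * n - 2 →
      del (φ j) = φ (j - 3 * n + 1) * φ (j - 2 * n + 1))
    (hdelbar0 : ∀ j, 1 ≤ j → j < 3 * n - 1 → delbar (φ j) = 0)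
    (hdelbar1 : delbar (φ (3 * n - 1)) = φ (2 * n) * φb n)
    (hdelbar : ∀ j, 3 * n ≤ j → j ≤ 4 * n - 2 →
      delbar (φ j) = φ (j - 2 * n) * φb (j - n))
    (hdelb0 : ∀ j, 1 ≤ j → j < 3 * n - 1 → del (φb j) = 0)
    (hdelb1 : del (φb (3 * n - 1)) = φb (2 * n) * φ n)
    (hdelb : ∀ j, 3 * n ≤ j → j ≤ 4 * n - 2 →
      del (φb j) = φb (j - 2 * n) * φ (j - n))
    (hdelbarb0 : ∀ j, 1 ≤ j → j ≤ 3 * n - 1 → delbar (φb j) = 0)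
    (hdelbarb : ∀ j, 3 * n ≤ j → j ≤ 4 * n - 2 →
      delbar (φb j) = φb (j - 3 * n + 1) * φb (j - 2 * n + 1)) :
    ((idx (4 * n - 3)).map (fun j => φ j * φb j)).prod
      = del (delbar
          ((((idx (4 * n - 2)).filter (fun j => j ≠ n - 1 ∧ j ≠ 2 * n - 1)).map
            (fun j => φ j * φb j)).prod)) :=
  stmt_12_general n hn del delbar hleib hleibb hdel0 hdel hdelbar0 hdelbar1 hdelbar hdelb0 hdelb1
    hdelb hdelbarb0 hdelbarb

end
end

section
/- Let g be a nilpotent Lie algebra of real dimension 2n with nilpotent complex structure J, and let φ¹,…,φⁿ be a co-frame of (1,0)-forms with dφⁱ ∈ Λ²⟨φ¹,…,φ^{i−1},φ̄¹,…,φ̄^{i−1}⟩ for each i. Let k be such that dφⁱ = 0 for i ≤ k and dφ^{k+1} ≠ 0. If the (1,1)-part ∂̄φ^{k+1} = Σ_{l,m≤k} C_{l m̄} φˡ∧φ̄ᵐ is nonzero with C_{i j̄} ≠ 0, then the (2k−1)-form η := φ¹∧⋯∧(omit φⁱ)∧⋯∧φ^{k+1}∧φ̄¹∧⋯∧(omit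 φ̄ʲ)∧⋯∧φ̄ᵏ satisfies dη = ±C_{i j̄} · φ¹∧⋯∧φᵏ∧φ̄¹∧⋯∧φ̄ᵏ. -/
/-!
Since φ¹,…,φᵏ and their conjugates are closed, the Leibniz rule moves `d` past them onto
φ^{k+1}, so dη = ±(wedge of the remaining 2k - 2 closed forms) ∧ dφ^{k+1}. Each term φˡ∧φ̄ᵐ,
φˡ∧φᵐ, φ̄ˡ∧φ̄ᵐ of dφ^{k+1} other than φⁱ∧φ̄ʲ repeats a factor already present and is killed;
the survivor completes φ¹∧⋯∧φᵏ∧φ̄¹∧⋯∧φ̄ᵏ up to a reordering, which costs only a sign.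
-/

noncomputable section

namespace ExteriorAlgebra

variable {R M : Type*} [CommRing R] [AddCommGroup M] [Module R M]

theorem ι_mul_ι_eq_neg (x y : M) : ι R x * ι R y = -(ι R y * ι R x) :=
  eq_neg_of_add_eq_zero_left (ι_add_mul_swap x y)

theorem ι_mul_prod_map_ι (x : M) :
    ∀ L : List M, ι R x * (L.map (ι R)).prod = (-1 : ℤˣ) ^ L.length • ((L.map (ι R)).prod * ι R x)
  | [] => by simp
  | y :: L => by
    rw [List.map_cons, List.prod_cons, ← mul_assoc, ι_mul_ι_eq_neg, neg_mul, mul_assoc,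
      ι_mul_prod_map_ι x L, mul_smul_comm, List.length_cons, pow_succ, mul_neg_one, Units.neg_smul,
      mul_assoc]

theorem prod_map_ι_mul_ι_of_mem {L : List M} {x : M} (h : x ∈ L) :
    (L.map (ι R)).prod * ι R x = 0 := by
  obtain ⟨L₁, L₂, rfl⟩ := List.append_of_mem h
  rw [List.map_append, List.prod_append, List.map_cons, List.prod_cons, mul_assoc, mul_assoc,
    ← mul_assoc (ι R x), ι_mul_prod_map_ι, smul_mul_assoc, mul_assoc, ι_sq_zero, mul_zero,
    smul_zero, mul_zero]

theorem prod_map_ι_mul_ι_mul_ι_of_mem {L : List M} {x y : M} (h : x ∈ L ∨ y ∈ L) :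
    (L.map (ι R)).prod * (ι R x * ι R y) = 0 := by
  rcases h with hx | hy
  · rw [← mul_assoc, prod_map_ι_mul_ι_of_mem hx, zero_mul]
  · rw [ι_mul_ι_eq_neg, mul_neg, ← mul_assoc, prod_map_ι_mul_ι_of_mem hy, zero_mul, neg_zero]

theorem exists_prod_map_ι_eq_units_smul_of_perm {L L' : List M} (h : L.Perm L') :
    ∃ u : ℤˣ, (L.map (ι R)).prod = u • (L'.map (ι R)).prod := by
  induction h with
  | nil => exact ⟨1, by simp⟩
  | cons x _ ih =>
    obtain ⟨u, hu⟩ := ih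
    exact ⟨u, by rw [List.map_cons, List.prod_cons, hu, mul_smul_comm]; rfl⟩
  | swap x y L =>
    refine ⟨-1, ?_⟩
    simp only [List.map_cons, List.prod_cons, ← mul_assoc, ι_mul_ι_eq_neg y, neg_mul,
      Units.neg_smul, one_smul]
  | trans _ _ ih₁ ih₂ =>
    obtain ⟨u₁, h₁⟩ := ih₁
    obtain ⟨u₂, h₂⟩ := ih₂
    exact ⟨u₁ * u₂, by rw [h₁, h₂, smul_smul]⟩

theorem map_prod_map_ι_mul (d : ExteriorAlgebra R M →ₗ[R] ExteriorAlgebra R M)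
    (hd : ∀ (x : M) (y : ExteriorAlgebra R M), d (ι R x * y) = d (ι R x) * y - ι R x * d y)
    {L : List M} (hL : ∀ x ∈ L, d (ι R x) = 0) (y : ExteriorAlgebra R M) :
    d ((L.map (ι R)).prod * y) = (-1 : ℤˣ) ^ L.length • ((L.map (ι R)).prod * d y) := by
  induction L with
  | nil => simp
  | cons x L ih =>
    rw [List.map_cons, List.prod_cons, mul_assoc, hd, hL x List.mem_cons_self, zero_mul, zero_sub,
      ih fun z hz => hL z (List.mem_cons_of_mem x hz), mul_smul_comm, List.length_cons, pow_succ,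
      mul_neg_one, Units.neg_smul, mul_assoc]

theorem prod_map_ι_mul_sum_sum_eq_single (f g : ℕ → M) {L : List M} {s t : Finset ℕ} {i j : ℕ}
    (hi : i ∈ s) (hj : j ∈ t) (hf : ∀ l ∈ s, l ≠ i → f l ∈ L) (hg : ∀ m ∈ t, m ≠ j → g m ∈ L)
    (C : ℕ → ℕ → R) :
    (L.map (ι R)).prod * ∑ l ∈ s, ∑ m ∈ t, C l m • (ι R (f l) * ι R (g m))
      = C i j • ((L.map (ι R)).prod * (ι R (f i) * ι R (g j))) := by
  simp_rw [Finset.mul_sum, mul_smul_comm]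
  rw [Finset.sum_eq_single_of_mem i hi, Finset.sum_eq_single_of_mem j hj]
  · intro m hm hmj
    rw [prod_map_ι_mul_ι_mul_ι_of_mem (.inr (hg m hm hmj)), smul_zero]
  · intro l hl hli
    refine Finset.sum_eq_zero fun m _ => ?_
    rw [prod_map_ι_mul_ι_mul_ι_of_mem (.inl (hf l hl hli)), smul_zero]

theorem prod_map_ι_mul_sum_sum_lt_eq_zero (f : ℕ → M) {L : List M} {k i : ℕ}
    (hf : ∀ l ∈ Finset.Icc 1 k, l ≠ i → f l ∈ L) (A : ℕ → ℕ → R) :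
    (L.map (ι R)).prod * ∑ l ∈ Finset.Icc 1 k, ∑ m ∈ Finset.Icc (l + 1) k,
      A l m • (ι R (f l) * ι R (f m)) = 0 := by
  simp_rw [Finset.mul_sum, mul_smul_comm]
  refine Finset.sum_eq_zero fun l hl => Finset.sum_eq_zero fun m hm => ?_
  rw [Finset.mem_Icc] at hl hm
  rw [prod_map_ι_mul_ι_mul_ι_of_mem, smul_zero]
  by_cases hli : l = i
  · exact .inr (hf m (Finset.mem_Icc.2 ⟨by omega, hm.2⟩) (by omega))
  · exact .inl (hf l (Finset.mem_Icc.2 hl) hli)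

end ExteriorAlgebra

def coframe (s : ℕ ⊕ ℕ) : Vsp := Finsupp.single s 1

theorem φ_eq_ι_coframe (l : ℕ) : φ l = ExteriorAlgebra.ι ℂ (coframe (.inl l)) := rfl

theorem φb_eq_ι_coframe (l : ℕ) : φb l = ExteriorAlgebra.ι ℂ (coframe (.inr l)) := rfl

theorem prod_map_φ (L : List ℕ) :
    (L.map φ).prod = ((L.map fun l => coframe (.inl l)).map (ExteriorAlgebra.ι ℂ)).prod := by
  rw [List.map_map]; rfl

theorem prod_map_φb (L : List ℕ) :
    (L.map φb).prod = ((L.map fun l => coframe (.inr l)).map (ExteriorAlgebra.ι ℂ)).prod := by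
  rw [List.map_map]; rfl

theorem mem_idx {l m : ℕ} : l ∈ idx m ↔ l ∈ Finset.Icc 1 m := by
  simp only [idx, List.mem_map, List.mem_range, Finset.mem_Icc]
  exact ⟨by rintro ⟨a, ha, rfl⟩; omega, fun h => ⟨l - 1, by omega, by omega⟩⟩

theorem nodup_idx (m : ℕ) : (idx m).Nodup :=
  List.nodup_range.map fun _ _ h => Nat.add_right_cancel h

theorem List.Nodup.perm_filter_ne_append {α : Type*} [DecidableEq α] {L : List α} {a : α}
    (hL : L.Nodup) (ha : a ∈ L) : (L.filter (· ≠ a) ++ [a]).Perm L := by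
  simpa [hL.erase_eq_filter, bne, _root_.beq_eq_decide] using
    (List.perm_append_singleton a _).trans (List.perm_cons_erase ha).symm

def closedFrame (k i j : ℕ) : List Vsp :=
  ((idx k).filter (· ≠ i)).map (fun l => coframe (.inl l))
    ++ ((idx k).filter (· ≠ j)).map (fun m => coframe (.inr m))

section closedFrame

open ExteriorAlgebra

variable {k i j : ℕ}

theorem coframe_inl_mem_closedFrame {l : ℕ} (hl : l ∈ Finset.Icc 1 k) (hli : l ≠ i) :
    coframe (.inl l) ∈ closedFrame k i j :=
  List.mem_append_left _ (List.mem_map_of_mem (List.mem_filter.2 ⟨mem_idx.2 hl, by simpa⟩))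

theorem coframe_inr_mem_closedFrame {m : ℕ} (hm : m ∈ Finset.Icc 1 k) (hmj : m ≠ j) :
    coframe (.inr m) ∈ closedFrame k i j :=
  List.mem_append_right _ (List.mem_map_of_mem (List.mem_filter.2 ⟨mem_idx.2 hm, by simpa⟩))

theorem forall_mem_closedFrame {p : Vsp → Prop} (hp : ∀ l ∈ Finset.Icc 1 k,
    p (coframe (.inl l)) ∧ p (coframe (.inr l))) : ∀ x ∈ closedFrame k i j, p x := by
  intro x hx
  rcases List.mem_append.1 hx with hx | hx <;> obtain ⟨l, hl, rfl⟩ := List.mem_map.1 hx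
  exacts [(hp l (mem_idx.1 (List.mem_of_mem_filter hl))).1,
    (hp l (mem_idx.1 (List.mem_of_mem_filter hl))).2]

theorem exists_prod_eq_units_smul_closedFrame_mul_φ :
    ∃ u : ℤˣ, (((idx k).filter (· ≠ i) ++ [k + 1]).map φ).prod
      * (((idx k).filter (· ≠ j)).map φb).prod
      = u • (((closedFrame k i j).map (ι ℂ)).prod * φ (k + 1)) := by
  have hperm : (((idx k).filter (· ≠ i) ++ [k + 1]).map (fun l => coframe (.inl l))
      ++ ((idx k).filter (· ≠ j)).map (fun m => coframe (.inr m))).Perm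
      (closedFrame k i j ++ [coframe (.inl (k + 1))]) := by
    rw [closedFrame, List.map_append, List.map_singleton, List.append_assoc, List.append_assoc]
    exact List.perm_append_comm.append_left _
  obtain ⟨u, hu⟩ := exists_prod_map_ι_eq_units_smul_of_perm (R := ℂ) hperm
  refine ⟨u, ?_⟩
  rw [prod_map_φ, prod_map_φb, ← List.prod_append, ← List.map_append, hu, List.map_append,
    List.prod_append, List.map_singleton, List.prod_singleton, φ_eq_ι_coframe]

theorem exists_prod_closedFrame_append_eq_units_smul (hi : i ∈ Finset.Icc 1 k)
    (hj : j ∈ Finset.Icc 1 k) :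
    ∃ w : ℤˣ, ((closedFrame k i j ++ [coframe (.inl i), coframe (.inr j)]).map (ι ℂ)).prod
      = w • (((idx k).map φ).prod * ((idx k).map φb).prod) := by
  have hφ := ((nodup_idx k).perm_filter_ne_append (mem_idx.2 hi)).map fun l => coframe (.inl l)
  have hφb := ((nodup_idx k).perm_filter_ne_append (mem_idx.2 hj)).map fun m => coframe (.inr m)
  rw [List.map_append, List.map_singleton] at hφ hφb
  have hperm : (closedFrame k i j ++ [coframe (.inl i), coframe (.inr j)]).Perm
      ((idx k).map (fun l => coframe (.inl l)) ++ (idx k).map (fun m => coframe (.inr m))) :=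
    (List.perm_iff_count.2 fun z => by
      simp [closedFrame, List.count_append, List.count_cons]; omega).trans (hφ.append hφb)
  obtain ⟨w, hw⟩ := exists_prod_map_ι_eq_units_smul_of_perm (R := ℂ) hperm
  refine ⟨w, ?_⟩
  rw [hw, prod_map_φ, prod_map_φb, ← List.prod_append, ← List.map_append]

theorem prod_closedFrame_mul_sum (hi : i ∈ Finset.Icc 1 k) (hj : j ∈ Finset.Icc 1 k)
    (C A B : ℕ → ℕ → ℂ) :
    ((closedFrame k i j).map (ι ℂ)).prod
      * ((∑ l ∈ Finset.Icc 1 k, ∑ m ∈ Finset.Icc 1 k, C l m • (φ l * φb m))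
        + (∑ l ∈ Finset.Icc 1 k, ∑ m ∈ Finset.Icc (l + 1) k, A l m • (φ l * φ m))
        + (∑ l ∈ Finset.Icc 1 k, ∑ m ∈ Finset.Icc (l + 1) k, B l m • (φb l * φb m)))
      = C i j • ((closedFrame k i j ++ [coframe (.inl i), coframe (.inr j)]).map (ι ℂ)).prod := by
  have hinl : ∀ l ∈ Finset.Icc 1 k, l ≠ i → coframe (.inl l) ∈ closedFrame k i j :=
    fun _ => coframe_inl_mem_closedFrame
  have hinr : ∀ m ∈ Finset.Icc 1 k, m ≠ j → coframe (.inr m) ∈ closedFrame k i j :=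
    fun _ => coframe_inr_mem_closedFrame
  simp only [φ_eq_ι_coframe, φb_eq_ι_coframe, mul_add]
  rw [prod_map_ι_mul_sum_sum_eq_single _ _ hi hj hinl hinr,
    prod_map_ι_mul_sum_sum_lt_eq_zero _ hinl, prod_map_ι_mul_sum_sum_lt_eq_zero _ hinr, add_zero,
    add_zero]
  simp [List.prod_append]

end closedFrame

theorem stmt_13_general (k i j : ℕ)
    (hi1 : 1 ≤ i) (hik : i ≤ k) (hj1 : 1 ≤ j) (hjk : j ≤ k)
    (d : ExtA →ₗ[ℂ] ExtA)
    (hleib : ∀ (v : Vsp) (y : ExtA),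
      d (ExteriorAlgebra.ι ℂ v * y)
        = d (ExteriorAlgebra.ι ℂ v) * y - ExteriorAlgebra.ι ℂ v * d y)
    (hclosed : ∀ l, 1 ≤ l → l ≤ k → d (φ l) = 0 ∧ d (φb l) = 0)
    (C A B : ℕ → ℕ → ℂ)
    (hstruct : d (φ (k + 1))
      = (∑ l ∈ Finset.Icc 1 k, ∑ m ∈ Finset.Icc 1 k, C l m • (φ l * φb m))
        + (∑ l ∈ Finset.Icc 1 k, ∑ m ∈ Finset.Icc (l + 1) k, A l m • (φ l * φ m))
        + (∑ l ∈ Finset.Icc 1 k, ∑ m ∈ Finset.Icc (l + 1) k, B l m • (φb l * φb m))) :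
    ∃ ε : ℂ, (ε = 1 ∨ ε = -1) ∧
      d (((((idx k).filter (· ≠ i)) ++ [k + 1]).map φ).prod
          * (((idx k).filter (· ≠ j)).map φb).prod)
        = (ε * C i j) • (((idx k).map φ).prod * ((idx k).map φb).prod) := by
  have hi : i ∈ Finset.Icc 1 k := Finset.mem_Icc.2 ⟨hi1, hik⟩
  have hj : j ∈ Finset.Icc 1 k := Finset.mem_Icc.2 ⟨hj1, hjk⟩
  have hdL : ∀ x ∈ closedFrame k i j, d (ExteriorAlgebra.ι ℂ x) = 0 :=
    forall_mem_closedFrame fun l hl => hclosed l (Finset.mem_Icc.1 hl).1 (Finset.mem_Icc.1 hl).2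
  obtain ⟨u, hu⟩ := exists_prod_eq_units_smul_closedFrame_mul_φ (k := k) (i := i) (j := j)
  obtain ⟨w, hw⟩ := exists_prod_closedFrame_append_eq_units_smul hi hj
  refine ⟨((u * (-1) ^ (closedFrame k i j).length * w : ℤˣ) : ℤ), ?_, ?_⟩
  · rcases Int.units_eq_one_or (u * (-1) ^ (closedFrame k i j).length * w) with h | h <;> simp [h]
  · rw [hu, LinearMap.map_smul_of_tower, ExteriorAlgebra.map_prod_map_ι_mul d hleib hdL, hstruct,
      prod_closedFrame_mul_sum hi hj, hw]
    simp only [Units.smul_def, ← Int.cast_smul_eq_zsmul ℂ, smul_smul, Units.val_mul, Int.cast_mul]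
    ring_nf

/-- nilpotent complex structure with dφⁱ = 0 for i ≤ k and
dφ^{k+1} with (1,1)-part Σ C_{lm̄} φˡ∧φ̄ᵐ, C_{ij̄} ≠ 0. Then
η = φ¹∧⋯(omit φⁱ)⋯∧φ^{k+1} ∧ φ̄¹∧⋯(omit φ̄ʲ)⋯∧φ̄ᵏ satisfies
dη = ±C_{ij̄}·φ¹∧⋯∧φᵏ∧φ̄¹∧⋯∧φ̄ᵏ. -/
theorem stmt_13 (n k i j : ℕ) (hk : 1 ≤ k) (hkn : k + 1 ≤ n)
    (hi1 : 1 ≤ i) (hik : i ≤ k) (hj1 : 1 ≤ j) (hjk : j ≤ k)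
    (d : ExtA →ₗ[ℂ] ExtA)
    (hleib : ∀ (v : Vsp) (y : ExtA),
      d (ExteriorAlgebra.ι ℂ v * y)
        = d (ExteriorAlgebra.ι ℂ v) * y - ExteriorAlgebra.ι ℂ v * d y)
    (hclosed : ∀ l, 1 ≤ l → l ≤ k → d (φ l) = 0 ∧ d (φb l) = 0)
    (C A B : ℕ → ℕ → ℂ)
    (hstruct : d (φ (k + 1))
      = (∑ l ∈ Finset.Icc 1 k, ∑ m ∈ Finset.Icc 1 k, C l m • (φ l * φb m))
        + (∑ l ∈ Finset.Icc 1 k, ∑ m ∈ Finset.Icc (l + 1) k, A l m • (φ l * φ m))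
        + (∑ l ∈ Finset.Icc 1 k, ∑ m ∈ Finset.Icc (l + 1) k, B l m • (φb l * φb m)))
    (hC : C i j ≠ 0) :
    ∃ ε : ℂ, (ε = 1 ∨ ε = -1) ∧
      d (((((idx k).filter (· ≠ i)) ++ [k + 1]).map φ).prod
          * (((idx k).filter (· ≠ j)).map φb).prod)
        = (ε * C i j) • (((idx k).map φ).prod * ((idx k).map φb).prod) :=
  stmt_13_general k i j hi1 hik hj1 hjk d hleib hclosed C A B hstruct

end
end
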